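/- Let φ : 𝕊ⁿ → ℝ≥0 be a function, α ∈ (0,1), C₀ > 0, and suppose |φ(t) − φ(𝟙)| ≤ C₀ d(t,𝟙)^α for all t ∈ 𝕊ⁿ, where 𝟙 = (1,0,…,0) and d(u,v) = |1 − ⟨u,v⟩|. If moreover φ(𝟙) > 1 and B₀ := sup over ξ ∈ 𝕊ⁿ of ∫_𝕋 |log φ(ξλ)| dλ < ∞, then log φ(𝟙) ≤ log 2 + |log C₀| + B₀/(2π) + κ, where κ = (α/2π) ∫₀^{2π} |log |1 − e^{iθ}|| dθ. -/

import Mathlib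

/-!
On the circle `t = e^{iθ} 𝟙` the Hölder bound gives `φ 𝟙 ≤ φ t + C₀ |1 - e^{iθ}|^α`, hence
`log φ(𝟙) ≤ log 2 + |log φ t| + |log C₀| + α |log |1 - e^{iθ}||` for every `θ`. Averaging over
`θ ∈ [0, 2π]` bounds the second term by `B₀ / 2π` and the last one by `κ`; the kernel
`log |1 - e^{iθ}|` is integrable because `1 - z` is meromorphic on the unit circle.
-/

open Real MeasureTheory
open scoped InnerProductSpace

theorem intervalIntegrable_abs_log_norm_one_sub_exp :
    IntervalIntegrable (fun θ : ℝ => |log ‖1 - Complex.exp (θ * Complex.I)‖|)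
      volume 0 (2 * π) := by
  have h : CircleIntegrable (fun z => log ‖1 - z‖) 0 1 :=
    (analyticOnNhd_const.sub analyticOnNhd_id).meromorphicOn.circleIntegrable_log_norm
  simpa [CircleIntegrable, circleMap_zero] using h.abs

theorem log_le_log_two_add_abs_log_add_abs_log {a b c : ℝ} (hc : 0 < c) (h : c ≤ a + b) :
    log c ≤ log 2 + |log a| + |log b| := by
  have hmax : c ≤ 2 * max a b := by linarith [le_max_left a b, le_max_right a b]
  have hmax_pos : 0 < max a b := by linarith
  have hlog_max : log (max a b) ≤ |log a| + |log b| := by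
    rcases max_cases a b with ⟨he, _⟩ | ⟨he, _⟩ <;> rw [he]
    · linarith [le_abs_self (log a), abs_nonneg (log b)]
    · linarith [le_abs_self (log b), abs_nonneg (log a)]
  calc log c ≤ log (2 * max a b) := log_le_log hc hmax
    _ = log 2 + log (max a b) := log_mul two_ne_zero hmax_pos.ne'
    _ ≤ log 2 + |log a| + |log b| := by linarith

theorem abs_log_mul_rpow_le (C : ℝ) {r : ℝ} (hr : 0 ≤ r) (α : ℝ) :
    |log (C * r ^ α)| ≤ |log C| + |α| * |log r| := by
  rcases hr.eq_or_lt with rfl | hr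
  · rcases eq_or_ne α 0 with rfl | hα
    · simp
    · rw [zero_rpow hα, mul_zero, log_zero, abs_zero]
      positivity
  rcases eq_or_ne C 0 with rfl | hC
  · simp only [zero_mul, log_zero, abs_zero]
    positivity
  rw [log_mul hC (rpow_pos_of_pos hr α).ne', log_rpow hr, ← abs_mul]
  exact abs_add_le _ _

theorem le_inv_mul_integral_of_le {a b c : ℝ} {f : ℝ → ℝ} (hab : a < b)
    (hf : IntervalIntegrable f volume a b) (h : ∀ x ∈ Set.Icc a b, c ≤ f x) :
    c ≤ (b - a)⁻¹ * ∫ x in a..b, f x := by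
  rw [le_inv_mul_iff₀ (sub_pos.2 hab)]
  simpa using intervalIntegral.integral_mono_on hab.le intervalIntegrable_const hf h

theorem norm_one_sub_inner_smul_self {E : Type*} [NormedAddCommGroup E] [InnerProductSpace ℂ E]
    {u : E} (hu : ‖u‖ = 1) (z : ℂ) : ‖1 - ⟪z • u, u⟫_ℂ‖ = ‖1 - z‖ := by
  rw [inner_smul_left, inner_self_eq_norm_sq_to_K, hu, ← Complex.norm_conj]
  simp

theorem normalization_step (n : ℕ) (hn : 2 ≤ n) (α C₀ B₀ : ℝ)
    (hα : α ∈ Set.Ioo (0:ℝ) 1)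
    (φ : EuclideanSpace ℂ (Fin n) → ℝ)
    (one : EuclideanSpace ℂ (Fin n))
    (hone : one = EuclideanSpace.single (⟨0, by omega⟩ : Fin n) 1)
    (d : EuclideanSpace ℂ (Fin n) → EuclideanSpace ℂ (Fin n) → ℝ)
    (hd : ∀ u v, d u v = ‖1 - ⟪u, v⟫_ℂ‖)
    (hHolder : ∀ t, ‖t‖ = 1 → |φ t - φ one| ≤ C₀ * d t one ^ α)
    (hφ1 : 1 < φ one)
    (hsliceInt : ∀ ξ : EuclideanSpace ℂ (Fin n), ‖ξ‖ = 1 →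
      IntervalIntegrable
        (fun θ => |Real.log (φ (Complex.exp (θ * Complex.I) • ξ))|)
        MeasureTheory.volume 0 (2 * π))
    (hslice : ∀ ξ : EuclideanSpace ℂ (Fin n), ‖ξ‖ = 1 →
      (∫ θ in (0:ℝ)..(2 * π),
        |Real.log (φ (Complex.exp (θ * Complex.I) • ξ))|) ≤ B₀)
    (κ : ℝ)
    (hκ : κ = (α / (2 * π)) *
      ∫ θ in (0:ℝ)..(2 * π),
        |Real.log (‖1 - Complex.exp (θ * Complex.I)‖)|) :
    Real.log (φ one) ≤ Real.log 2 + |Real.log C₀| + B₀ / (2 * π) + κ := by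
  set e : ℝ → ℂ := fun θ => Complex.exp (θ * Complex.I)
  have hone_norm : ‖one‖ = 1 := by simp [hone]
  have hpointwise : ∀ θ ∈ Set.Icc 0 (2 * π), log (φ one) ≤
      (log 2 + |log C₀|) + |log (φ (e θ • one))| + α * |log ‖1 - e θ‖| := by
    intro θ _
    have hHolderθ := hHolder (e θ • one) (by simp [e, norm_smul, hone_norm])
    rw [hd, norm_one_sub_inner_smul_self hone_norm] at hHolderθ
    have hsplit := log_le_log_two_add_abs_log_add_abs_log (one_pos.trans hφ1)
      (sub_le_iff_le_add'.1 (abs_sub_le_iff.1 hHolderθ).2)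
    have hrpow := abs_log_mul_rpow_le C₀ (norm_nonneg (1 - e θ)) α
    rw [abs_of_pos hα.1] at hrpow
    linarith
  have hconst_int : IntervalIntegrable (fun _ : ℝ => log 2 + |log C₀|) volume 0 (2 * π) :=
    intervalIntegrable_const
  have hslice_int := hsliceInt one hone_norm
  have hkernel_int := intervalIntegrable_abs_log_norm_one_sub_exp.const_mul α
  have havg := le_inv_mul_integral_of_le (by positivity)
    ((hconst_int.add hslice_int).add hkernel_int) hpointwise
  rw [intervalIntegral.integral_add (hconst_int.add hslice_int) hkernel_int,
    intervalIntegral.integral_add hconst_int hslice_int, intervalIntegral.integral_const,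
    intervalIntegral.integral_const_mul, smul_eq_mul, sub_zero] at havg
  have hslice_le := hslice one hone_norm
  rw [hκ]
  field_simp at havg ⊢
  linarith
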